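/- arXiv:1611.08640 — 3 statements merged into one kernel-verified Lean document; each statement's English description precedes it below -/
import Mathlib

section
/- Let B be an n×m real matrix with linearly independent columns, let Π_B = B(BᵀB)⁻¹Bᵀ be the orthogonal projection onto the column space of B, and let x ∈ ℝⁿ. Then xᵀ(I_n − Π_B)x = det([x B]ᵀ[x B]) / det(BᵀB), where [x B] is the n×(m+1) matrix obtained by adjoining x as a first column to B. -/
/-!
The Gram matrix of `[x B]` is the block matrix `[[xᵀx, xᵀB], [Bᵀx, BᵀB]]`. Its lower right block
`BᵀB` is invertible because `ker (BᵀB) = ker B = 0`, so the Schur complement formula gives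
`det ([x B]ᵀ[x B]) = det (BᵀB) · (xᵀx - xᵀB(BᵀB)⁻¹Bᵀx) = det (BᵀB) · xᵀ(I - Π_B)x`.
-/

open Matrix

namespace Matrix

theorem isUnit_det_transpose_mul_self_of_linearIndependent_col {ι κ R : Type*} [Fintype ι]
    [Fintype κ] [DecidableEq κ] [Field R] [LinearOrder R] [IsStrictOrderedRing R]
    {B : Matrix ι κ R} (hB : LinearIndependent R B.col) : IsUnit (Bᵀ * B).det := by
  rw [← isUnit_iff_isUnit_det, ← mulVec_injective_iff_isUnit, ← coe_mulVecLin,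
    ← LinearMap.ker_eq_bot, ker_mulVecLin_transpose_mul_self, LinearMap.ker_eq_bot, coe_mulVecLin,
    mulVec_injective_iff]
  exact hB

theorem det_transpose_mul_self_fromCols_replicateCol {ι κ R : Type*} [Fintype ι] [DecidableEq ι]
    [Fintype κ] [DecidableEq κ] [CommRing R] (B : Matrix ι κ R) (x : ι → R)
    (hB : IsUnit (Bᵀ * B).det) :
    ((fromCols (replicateCol Unit x) B)ᵀ * fromCols (replicateCol Unit x) B).det =
      (Bᵀ * B).det * x ⬝ᵥ ((1 - B * (Bᵀ * B)⁻¹ * Bᵀ) *ᵥ x) := by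
  have := (Bᵀ * B).invertibleOfIsUnitDet hB
  have schur : replicateRow Unit x * replicateCol Unit x -
      replicateRow Unit x * B * ⅟(Bᵀ * B) * (Bᵀ * replicateCol Unit x) =
      replicateRow Unit x * replicateCol Unit ((1 - B * (Bᵀ * B)⁻¹ * Bᵀ) *ᵥ x) := by
    rw [replicateCol_mulVec, invOf_eq_nonsing_inv]
    simp only [Matrix.mul_sub, Matrix.sub_mul, Matrix.one_mul, Matrix.mul_assoc]
  rw [transpose_fromCols, fromRows_mul_fromCols, det_fromBlocks₂₂, transpose_replicateCol, schur,
    replicateRow_mul_replicateCol, det_unique (of _), of_apply]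

theorem of_cons_eq_fromCols_submatrix {ι R : Type*} {m : ℕ} (B : Matrix ι (Fin m) R)
    (x : ι → R) :
    (of fun i => Fin.cons (x i) (B i) : Matrix ι (Fin (m + 1)) R) =
      (fromCols (replicateCol Unit x) B).submatrix id
        (((finSuccEquiv m).trans (Equiv.optionEquivSumPUnit _)).trans (Equiv.sumComm _ _)) := by
  ext i j
  cases j using Fin.cases <;> rfl

end Matrix

/-- If `B` is an `n × m` real matrix with linearly independent columns,
`Π_B = B(BᵀB)⁻¹Bᵀ` the projection onto its column space, and `x ∈ ℝⁿ`, then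
`xᵀ(I - Π_B)x = det([x B]ᵀ[x B]) / det(BᵀB)`, where `[x B]` is `B` with `x`
adjoined as a first column. -/
theorem resid_quadratic_eq_det_ratio
    (n m : ℕ) (B : Matrix (Fin n) (Fin m) ℝ)
    (hB : LinearIndependent ℝ fun l : Fin m => (fun i => B i l))
    (x : Fin n → ℝ) :
    x ⬝ᵥ ((1 - B * (Bᵀ * B)⁻¹ * Bᵀ) *ᵥ x) =
      ((Matrix.of fun i => Fin.cons (x i) (B i) : Matrix (Fin n) (Fin (m + 1)) ℝ)ᵀ *
          (Matrix.of fun i => Fin.cons (x i) (B i) : Matrix (Fin n) (Fin (m + 1)) ℝ)).det /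
        (Bᵀ * B).det := by
  have hG := isUnit_det_transpose_mul_self_of_linearIndependent_col hB
  rw [of_cons_eq_fromCols_submatrix, transpose_submatrix,
    ← submatrix_mul _ _ _ _ _ Function.bijective_id, det_submatrix_equiv_self,
    det_transpose_mul_self_fromCols_replicateCol B x hG, mul_div_cancel_left₀ _ hG.ne_zero]
end

section
/- Let B = [b₁ … b_m] be an n×m real matrix whose Gram matrix BᵀB has smallest eigenvalue at least α > 0, let x ∈ ℝⁿ with ‖x‖₂ = 1, and let z ∈ ℝⁿ satisfy |xᵀz| ≤ π and |b_lᵀz| ≤ π for every column l = 1, …, m. Then |xᵀ(I_n − Π_B)z| ≤ π + √m · π / √α, where Π_B = B(BᵀB)⁻¹Bᵀ is the orthogonal projection onto the column space of B. -/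
/-!
Write `Π_B z = B t` with `(BᵀB) t = Bᵀz`. Then `‖Bt‖² = t ⬝ Bᵀz ≤ ‖t‖ ‖Bᵀz‖`, while the
eigenvalue bound gives `α ‖t‖² ≤ ‖Bt‖²`; together `‖Π_B z‖² ≤ ‖Bᵀz‖² / α ≤ m π² / α`.
Cauchy–Schwarz against the unit vector `x` and the triangle inequality finish.
-/

open Matrix

section
variable {ι κ : Type*} [Fintype ι] [Fintype κ]

lemma sq_dotProduct_le_dotProduct_self_mul (u v : ι → ℝ) :
    (u ⬝ᵥ v) ^ 2 ≤ (u ⬝ᵥ u) * (v ⬝ᵥ v) := by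
  simpa only [dotProduct, sq] using Finset.sum_mul_sq_le_sq_mul_sq Finset.univ u v

lemma dotProduct_self_nonneg (v : ι → ℝ) : 0 ≤ v ⬝ᵥ v :=
  Finset.sum_nonneg fun _ _ => mul_self_nonneg _

lemma dotProduct_transpose_mul_self_mulVec (B : Matrix ι κ ℝ) (t : κ → ℝ) :
    t ⬝ᵥ ((Bᵀ * B) *ᵥ t) = (B *ᵥ t) ⬝ᵥ (B *ᵥ t) := by
  rw [← mulVec_mulVec, dotProduct_mulVec, vecMul_transpose]

lemma isUnit_det_of_coercive [DecidableEq κ] {G : Matrix κ κ ℝ} {α : ℝ} (hα : 0 < α)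
    (hG : ∀ v, α * (v ⬝ᵥ v) ≤ v ⬝ᵥ (G *ᵥ v)) : IsUnit G.det := by
  rw [← isUnit_iff_isUnit_det, ← mulVec_injective_iff_isUnit]
  intro a b hab
  have hG0 : G *ᵥ (a - b) = 0 := by rw [mulVec_sub, hab, sub_self]
  have hle := hG (a - b)
  rw [hG0, dotProduct_zero] at hle
  have h0 : (a - b) ⬝ᵥ (a - b) = 0 :=
    le_antisymm (nonpos_of_mul_nonpos_right hle hα) (dotProduct_self_nonneg _)
  exact sub_eq_zero.mp (dotProduct_self_eq_zero.mp h0)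

lemma mul_dotProduct_self_mulVec_le {B : Matrix ι κ ℝ} {α : ℝ}
    (hB : ∀ v, α * (v ⬝ᵥ v) ≤ v ⬝ᵥ ((Bᵀ * B) *ᵥ v)) (t : κ → ℝ) :
    α * ((B *ᵥ t) ⬝ᵥ (B *ᵥ t)) ≤ ((Bᵀ * B) *ᵥ t) ⬝ᵥ ((Bᵀ * B) *ᵥ t) := by
  set w := (Bᵀ * B) *ᵥ t
  set q := (B *ᵥ t) ⬝ᵥ (B *ᵥ t)
  have hq : t ⬝ᵥ w = q := dotProduct_transpose_mul_self_mulVec B t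
  have hcs := sq_dotProduct_le_dotProduct_self_mul t w
  have hlow := hB t
  rw [hq] at hcs hlow
  have hw0 := dotProduct_self_nonneg w
  by_contra! hlt
  have hαq : 0 < α * q := hw0.trans_lt hlt
  have hα : 0 < α := pos_of_mul_pos_left hαq (dotProduct_self_nonneg _)
  have hq0 : 0 < q := pos_of_mul_pos_right hαq hα.le
  have : α * q ^ 2 ≤ q * (w ⬝ᵥ w) := by
    calc α * q ^ 2 ≤ α * ((t ⬝ᵥ t) * (w ⬝ᵥ w)) := mul_le_mul_of_nonneg_left hcs hα.le
      _ = (α * (t ⬝ᵥ t)) * (w ⬝ᵥ w) := by ring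
      _ ≤ q * (w ⬝ᵥ w) := mul_le_mul_of_nonneg_right hlow hw0
  nlinarith

lemma sq_dotProduct_mulVec_proj_le [DecidableEq κ] {B : Matrix ι κ ℝ} {α : ℝ} (hα : 0 < α)
    (hB : ∀ v, α * (v ⬝ᵥ v) ≤ v ⬝ᵥ ((Bᵀ * B) *ᵥ v)) (x z : ι → ℝ) :
    (x ⬝ᵥ ((B * (Bᵀ * B)⁻¹ * Bᵀ) *ᵥ z)) ^ 2 ≤ (x ⬝ᵥ x) * ((Bᵀ *ᵥ z) ⬝ᵥ (Bᵀ *ᵥ z) / α) := by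
  set t := (Bᵀ * B)⁻¹ *ᵥ (Bᵀ *ᵥ z)
  have ht : (Bᵀ * B) *ᵥ t = Bᵀ *ᵥ z := by
    rw [mulVec_mulVec, mul_nonsing_inv _ (isUnit_det_of_coercive hα hB), one_mulVec]
  have hproj : (B * (Bᵀ * B)⁻¹ * Bᵀ) *ᵥ z = B *ᵥ t := by
    rw [← mulVec_mulVec, ← mulVec_mulVec]
  have hBt : (B *ᵥ t) ⬝ᵥ (B *ᵥ t) ≤ (Bᵀ *ᵥ z) ⬝ᵥ (Bᵀ *ᵥ z) / α := by
    rw [le_div_iff₀' hα, ← ht]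
    exact mul_dotProduct_self_mulVec_le hB t
  rw [hproj]
  exact (sq_dotProduct_le_dotProduct_self_mul x _).trans
    (mul_le_mul_of_nonneg_left hBt (dotProduct_self_nonneg x))

lemma dotProduct_self_transpose_mulVec_le (B : Matrix ι κ ℝ) (z : ι → ℝ) {c : ℝ}
    (hz : ∀ l, |(fun i => B i l) ⬝ᵥ z| ≤ c) :
    (Bᵀ *ᵥ z) ⬝ᵥ (Bᵀ *ᵥ z) ≤ Fintype.card κ * c ^ 2 := by
  calc (Bᵀ *ᵥ z) ⬝ᵥ (Bᵀ *ᵥ z) = ∑ l, |(fun i => B i l) ⬝ᵥ z| ^ 2 :=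
        Finset.sum_congr rfl fun l _ => (sq _).symm.trans (sq_abs _).symm
    _ ≤ ∑ _l : κ, c ^ 2 := by gcongr with l; exact hz l
    _ = Fintype.card κ * c ^ 2 := by simp

end

/-- If the Gram matrix `BᵀB` of `B = [b₁ … b_m]` has smallest eigenvalue
at least `α > 0`, `x ∈ ℝⁿ` is a unit vector, and `z ∈ ℝⁿ` satisfies `|xᵀz| ≤ π` and
`|b_lᵀ z| ≤ π` for every column `l`, then `|xᵀ(I - Π_B)z| ≤ π + √m ⬝ π / √α`,
where `Π_B = B(BᵀB)⁻¹Bᵀ`. -/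
theorem abs_tilted_inner_le
    (n m : ℕ) (B : Matrix (Fin n) (Fin m) ℝ)
    (α : ℝ) (hα : 0 < α)
    (heig : ∀ v : Fin m → ℝ, α * (v ⬝ᵥ v) ≤ v ⬝ᵥ ((Bᵀ * B) *ᵥ v))
    (x : Fin n → ℝ) (hx : ∑ i, x i ^ 2 = 1)
    (z : Fin n → ℝ) (piv : ℝ)
    (hxz : |x ⬝ᵥ z| ≤ piv)
    (hz : ∀ l : Fin m, |(fun i => B i l) ⬝ᵥ z| ≤ piv) :
    |x ⬝ᵥ ((1 - B * (Bᵀ * B)⁻¹ * Bᵀ) *ᵥ z)| ≤ piv + Real.sqrt m * piv / Real.sqrt α := by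
  have hpiv : 0 ≤ piv := (abs_nonneg _).trans hxz
  have hxx : x ⬝ᵥ x = 1 := by simpa only [dotProduct, sq] using hx
  have hproj : |x ⬝ᵥ ((B * (Bᵀ * B)⁻¹ * Bᵀ) *ᵥ z)| ≤ Real.sqrt m * piv / Real.sqrt α := by
    rw [← Real.sqrt_sq hpiv, ← Real.sqrt_mul (Nat.cast_nonneg m), ← Real.sqrt_div' _ hα.le]
    refine Real.abs_le_sqrt ((sq_dotProduct_mulVec_proj_le hα heig x z).trans ?_)
    rw [hxx, one_mul]
    gcongr
    simpa using dotProduct_self_transpose_mulVec_le B z hz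
  rw [sub_mulVec, one_mulVec, dotProduct_sub]
  exact (abs_sub _ _).trans (add_le_add hxz hproj)
end

section
/- Let B be an n×m real matrix and x ∈ ℝⁿ with ‖x‖₂ = 1, such that M = [x B] has linearly independent columns and the smallest eigenvalue of MᵀM is at least τ > 0. Then 1 − xᵀΠ_B x ≥ τ, where Π_B = B(BᵀB)⁻¹Bᵀ is the orthogonal projection onto the column space of B; more precisely, with θ = (BᵀB)⁻¹Bᵀx one has 1 − xᵀΠ_B x = ‖x − Bθ‖₂² ≥ (1 + ‖θ‖₂²)·τ ≥ τ. -/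
/-!
Testing the Rayleigh bound `τ ‖v‖² ≤ ‖M v‖²` on `v = (0, w)` shows that `B` is injective, so
`BᵀB` is invertible and `θ` solves the normal equations `BᵀB θ = Bᵀ x`. Hence `Π_B x = Bθ` and the
residual `x - Bθ` is orthogonal to `Bθ`, which gives `‖x - Bθ‖² = 1 - xᵀΠ_B x`. Testing the bound on
`v = (1, -θ)`, for which `M v = x - Bθ`, gives `(1 + ‖θ‖²) τ ≤ ‖x - Bθ‖²`.
-/

open Matrix

section
variable {ι κ R : Type*} [Fintype κ]

theorem dotProduct_transpose_mul_self_mulVec_s11 [Fintype ι] [CommSemiring R] (A : Matrix ι κ R)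
    (v : κ → R) :
    v ⬝ᵥ ((Aᵀ * A) *ᵥ v) = (A *ᵥ v) ⬝ᵥ (A *ᵥ v) := by
  rw [← mulVec_mulVec, dotProduct_mulVec, vecMul_transpose]

theorem of_cons_mulVec_cons [CommSemiring R] {k : ℕ} (x : ι → R) (B : Matrix ι (Fin k) R)
    (a : R) (w : Fin k → R) :
    (of fun i => Fin.cons (x i) (B i) : Matrix ι (Fin (k + 1)) R) *ᵥ vecCons a w
      = a • x + B *ᵥ w := by
  ext i
  simp [mulVec, dotProduct, Fin.sum_univ_succ, mul_comm]

theorem dotProduct_self_eq_sum_sq [CommSemiring R] (v : κ → R) : v ⬝ᵥ v = ∑ i, v i ^ 2 := by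
  simp only [dotProduct, sq]

theorem mulVec_injective_of_le_dotProduct [Fintype ι] [CommRing R] [LinearOrder R]
    [IsStrictOrderedRing R] {A : Matrix ι κ R} {τ : R} (hτ : 0 < τ)
    (h : ∀ v, τ * (v ⬝ᵥ v) ≤ (A *ᵥ v) ⬝ᵥ (A *ᵥ v)) : Function.Injective A.mulVec := by
  refine (injective_iff_map_eq_zero A.mulVecLin).2 fun v hv => ?_
  have hv' : τ * (v ⬝ᵥ v) ≤ 0 := by simpa [← mulVecLin_apply, hv] using h v
  exact dotProduct_self_eq_zero.1 <| le_antisymm (nonpos_of_mul_nonpos_right hv' hτ) <|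
    Finset.sum_nonneg fun i _ => mul_self_nonneg (v i)

theorem dotProduct_mulVec_of_normal_eq [Fintype ι] [CommRing R] {B : Matrix ι κ R} {x : ι → R}
    {θ : κ → R} (h : (Bᵀ * B) *ᵥ θ = Bᵀ *ᵥ x) : x ⬝ᵥ (B *ᵥ θ) = (B *ᵥ θ) ⬝ᵥ (B *ᵥ θ) := by
  rw [← dotProduct_transpose_mul_self_mulVec_s11, h, dotProduct_transpose_mulVec]

theorem sub_mulVec_dotProduct_self_of_normal_eq [Fintype ι] [CommRing R] {B : Matrix ι κ R}
    {x : ι → R} {θ : κ → R} (h : (Bᵀ * B) *ᵥ θ = Bᵀ *ᵥ x) :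
    (x - B *ᵥ θ) ⬝ᵥ (x - B *ᵥ θ) = x ⬝ᵥ x - x ⬝ᵥ (B *ᵥ θ) := by
  have hx := dotProduct_mulVec_of_normal_eq h
  rw [sub_dotProduct, dotProduct_sub, dotProduct_sub, dotProduct_comm (B *ᵥ θ) x, ← hx]
  ring

end

theorem one_sub_proj_quadratic_ge_general
    (n m : ℕ) (B : Matrix (Fin n) (Fin m) ℝ)
    (x : Fin n → ℝ) (hx : ∑ i, x i ^ 2 = 1)
    (M : Matrix (Fin n) (Fin (m + 1)) ℝ)
    (hM : M = Matrix.of fun i => Fin.cons (x i) (B i))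
    (τ : ℝ) (hτ : 0 < τ)
    (heig : ∀ v : Fin (m + 1) → ℝ, τ * (v ⬝ᵥ v) ≤ v ⬝ᵥ ((Mᵀ * M) *ᵥ v))
    (θ : Fin m → ℝ) (hθ : θ = (Bᵀ * B)⁻¹ *ᵥ (Bᵀ *ᵥ x)) :
    1 - x ⬝ᵥ ((B * (Bᵀ * B)⁻¹ * Bᵀ) *ᵥ x) = ∑ i, (x i - (B *ᵥ θ) i) ^ 2 ∧
    (1 + ∑ l, θ l ^ 2) * τ ≤ ∑ i, (x i - (B *ᵥ θ) i) ^ 2 ∧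
    τ ≤ 1 - x ⬝ᵥ ((B * (Bᵀ * B)⁻¹ * Bᵀ) *ᵥ x) := by
  subst hM
  simp only [dotProduct_transpose_mul_self_mulVec_s11] at heig
  have hBinj : Function.Injective B.mulVec := mulVec_injective_of_le_dotProduct hτ fun w => by
    have h := heig (vecCons 0 w)
    rwa [of_cons_mulVec_cons, cons_dotProduct_cons, zero_smul, zero_add, zero_mul, zero_add] at h
  have hunit : IsUnit (Bᵀ * B).det := by
    simpa using (PosDef.conjTranspose_mul_self B hBinj).det_pos.ne'.isUnit
  have hnormal : (Bᵀ * B) *ᵥ θ = Bᵀ *ᵥ x := by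
    rw [hθ, mulVec_mulVec, mul_nonsing_inv _ hunit, one_mulVec]
  have hproj : (B * (Bᵀ * B)⁻¹ * Bᵀ) *ᵥ x = B *ᵥ θ := by
    rw [hθ, ← mulVec_mulVec, ← mulVec_mulVec]
  have hresidual : 1 - x ⬝ᵥ ((B * (Bᵀ * B)⁻¹ * Bᵀ) *ᵥ x) = ∑ i, (x i - (B *ᵥ θ) i) ^ 2 := by
    have := sub_mulVec_dotProduct_self_of_normal_eq hnormal
    simp only [dotProduct_self_eq_sum_sq, hx, Pi.sub_apply] at this
    rw [hproj, this]
  have hlower : (1 + ∑ l, θ l ^ 2) * τ ≤ ∑ i, (x i - (B *ᵥ θ) i) ^ 2 := by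
    have h := heig (vecCons 1 (-θ))
    rw [of_cons_mulVec_cons, cons_dotProduct_cons, one_smul, mulVec_neg, ← sub_eq_add_neg, one_mul,
      dotProduct_neg, neg_dotProduct, neg_neg] at h
    simp only [dotProduct_self_eq_sum_sq, Pi.sub_apply] at h
    linarith
  refine ⟨hresidual, hlower, ?_⟩
  have : 0 ≤ ∑ l, θ l ^ 2 := Finset.sum_nonneg fun l _ => sq_nonneg (θ l)
  nlinarith

/-- Let `x` be a unit vector and `B` an `n × m` matrix such that
`M = [x B]` has linearly independent columns and the smallest eigenvalue of `MᵀM`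
is at least `τ > 0`.  Then, with `θ = (BᵀB)⁻¹Bᵀx` and `Π_B = B(BᵀB)⁻¹Bᵀ`:
`1 - xᵀΠ_B x = ‖x - Bθ‖₂² ≥ (1 + ‖θ‖₂²)τ ≥ τ`, in particular `1 - xᵀΠ_B x ≥ τ`. -/
theorem one_sub_proj_quadratic_ge
    (n m : ℕ) (B : Matrix (Fin n) (Fin m) ℝ)
    (x : Fin n → ℝ) (hx : ∑ i, x i ^ 2 = 1)
    (M : Matrix (Fin n) (Fin (m + 1)) ℝ)
    (hM : M = Matrix.of fun i => Fin.cons (x i) (B i))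
    (hind : LinearIndependent ℝ fun k : Fin (m + 1) => (fun i => M i k))
    (τ : ℝ) (hτ : 0 < τ)
    (heig : ∀ v : Fin (m + 1) → ℝ, τ * (v ⬝ᵥ v) ≤ v ⬝ᵥ ((Mᵀ * M) *ᵥ v))
    (θ : Fin m → ℝ) (hθ : θ = (Bᵀ * B)⁻¹ *ᵥ (Bᵀ *ᵥ x)) :
    1 - x ⬝ᵥ ((B * (Bᵀ * B)⁻¹ * Bᵀ) *ᵥ x) = ∑ i, (x i - (B *ᵥ θ) i) ^ 2 ∧
    (1 + ∑ l, θ l ^ 2) * τ ≤ ∑ i, (x i - (B *ᵥ θ) i) ^ 2 ∧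
    τ ≤ 1 - x ⬝ᵥ ((B * (Bᵀ * B)⁻¹ * Bᵀ) *ᵥ x) :=
  one_sub_proj_quadratic_ge_general n m B x hx M hM τ hτ heig θ hθ
end
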